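/- arXiv:2007.04958 — 2 statements merged into one kernel-verified Lean document; each statement's English description precedes it below -/
import Mathlib

section
/- Let G̃₀(s) = 1/(2 cosh √s). For ω > 0, Im G̃₀(iω) = 0 if and only if ω = 2k²π² for some positive integer k. Moreover G̃₀(iω) → 1/2 as ω → 0⁺, and at ω₁ = 2π², G̃₀(iω₁) = 1/(e^π + e^{−π}) · (−1), i.e. Re G̃₀(i·2π²) = −1/(e^π + e^{−π}). -/
open Real Complex Filter

lemma sqrt_I_mul (ω : ℝ) (hω : 0 < ω) :
    (Complex.I * (ω : ℂ)) ^ ((1 : ℂ) / 2) =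
      (Real.sqrt (ω / 2) : ℂ) * (1 + Complex.I) := by
  have hne : Complex.I * (ω : ℂ) ≠ 0 := by
    simp [Complex.I_ne_zero, Complex.ofReal_ne_zero, hω.ne']
  have habs : ‖Complex.I * (ω : ℂ)‖ = ω := by
    simp [abs_of_pos hω]
  have harg : (Complex.I * (ω : ℂ)).arg = π / 2 := by
    rw [mul_comm, Complex.arg_real_mul _ hω, Complex.arg_I]
  have hlog : Complex.log (Complex.I * (ω : ℂ)) =
      (Real.log ω : ℂ) + (π / 2 : ℝ) * Complex.I := by
    simp [Complex.log, habs, harg]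
  rw [Complex.cpow_def_of_ne_zero hne, hlog]
  have h1 : ((Real.log ω : ℂ) + (π / 2 : ℝ) * Complex.I) * (1 / 2)
      = ((Real.log ω / 2 : ℝ) : ℂ) + ((π / 4 : ℝ) : ℂ) * Complex.I := by
    push_cast; ring
  rw [h1, Complex.exp_add, Complex.exp_mul_I]
  rw [← Complex.ofReal_exp, ← Complex.ofReal_cos, ← Complex.ofReal_sin]
  have hexp : Real.exp (Real.log ω / 2) = Real.sqrt ω := by
    rw [show Real.log ω / 2 = Real.log ω * (2 : ℝ)⁻¹ by ring,
      ← Real.rpow_def_of_pos hω, Real.sqrt_eq_rpow]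
    norm_num
  have hcos : Real.cos (π / 4) = Real.sqrt 2 / 2 := Real.cos_pi_div_four
  have hsin : Real.sin (π / 4) = Real.sqrt 2 / 2 := Real.sin_pi_div_four
  have h2 : Real.sqrt (1 / 2 : ℝ) = Real.sqrt 2 / 2 := by
    rw [show (1 : ℝ) / 2 = (Real.sqrt 2 / 2) ^ 2 by
      rw [div_pow, Real.sq_sqrt] <;> norm_num]
    exact Real.sqrt_sq (by positivity)
  have hs : Real.sqrt ω * (Real.sqrt 2 / 2) = Real.sqrt (ω / 2) := by
    rw [show ω / 2 = ω * (1 / 2) by ring, Real.sqrt_mul hω.le, h2]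
  rw [hexp, hcos, hsin]
  push_cast
  rw [← hs]
  push_cast
  ring

lemma cosh_mul_one_add_I (r : ℝ) :
    Complex.cosh ((r : ℂ) * (1 + Complex.I)) =
      ((Real.cosh r * Real.cos r : ℝ) : ℂ) +
        ((Real.sinh r * Real.sin r : ℝ) : ℂ) * Complex.I := by
  have : (r : ℂ) * (1 + Complex.I) = (r : ℂ) + (r : ℂ) * Complex.I := by ring
  rw [this, Complex.cosh_add, Complex.cosh_mul_I, Complex.sinh_mul_I]
  rw [← Complex.ofReal_cosh, ← Complex.ofReal_cos, ← Complex.ofReal_sinh,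
    ← Complex.ofReal_sin]
  push_cast
  ring

/-- For `G̃₀(s) = 1/(2 cosh √s)` (principal square root):
for `ω > 0`, `Im G̃₀(iω) = 0` iff `ω = 2k²π²` for some positive integer `k`;
`G̃₀(iω) → 1/2` as `ω → 0⁺`; and `G̃₀(i·2π²) = -1/(e^π + e^{-π})`. -/
theorem stmt17 :
    (∀ ω : ℝ, 0 < ω →
      ((1 / (2 * Complex.cosh ((Complex.I * (ω : ℂ)) ^ ((1 : ℂ) / 2)))).im = 0 ↔
        ∃ k : ℕ, 1 ≤ k ∧ ω = 2 * (k : ℝ) ^ 2 * π ^ 2)) ∧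
    Tendsto (fun ω : ℝ => 1 / (2 * Complex.cosh ((Complex.I * (ω : ℂ)) ^ ((1 : ℂ) / 2))))
      (nhdsWithin 0 (Set.Ioi 0)) (nhds (1 / 2 : ℂ)) ∧
    (1 / (2 * Complex.cosh ((Complex.I * ((2 * π ^ 2 : ℝ) : ℂ)) ^ ((1 : ℂ) / 2))) =
      (-(1 / (Real.exp π + Real.exp (-π))) : ℝ)) := by
  refine ⟨?_, ?_, ?_⟩
  · intro ω hω
    set r : ℝ := Real.sqrt (ω / 2) with hr
    have hr0 : 0 < r := Real.sqrt_pos.2 (by linarith)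
    have hr2 : r ^ 2 = ω / 2 := Real.sq_sqrt (by linarith)
    rw [sqrt_I_mul ω hω, cosh_mul_one_add_I]
    set a : ℝ := Real.cosh r * Real.cos r
    set b : ℝ := Real.sinh r * Real.sin r
    have him : (1 / (2 * (((a : ℂ)) + ((b : ℂ)) * Complex.I))).im
        = -(2 * b) / Complex.normSq (2 * (((a : ℂ)) + ((b : ℂ)) * Complex.I)) := by
      rw [one_div, Complex.inv_im]
      congr 1
      simp
    have hb_iff : (1 / (2 * (((a : ℂ)) + ((b : ℂ)) * Complex.I))).im = 0 ↔ b = 0 := by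
      rw [him]
      constructor
      · intro h
        rcases div_eq_zero_iff.mp h with h1 | h1
        · linarith [neg_eq_zero.mp h1]
        · have hz : (2 * (((a : ℂ)) + ((b : ℂ)) * Complex.I)) = 0 :=
            Complex.normSq_eq_zero.mp h1
          have : ((a : ℂ)) + ((b : ℂ)) * Complex.I = 0 := by
            rcases mul_eq_zero.mp hz with h2 | h2
            · norm_num at h2
            · exact h2
          have := congrArg Complex.im this
          simpa using this
      · intro h; rw [h]; simp
    rw [hb_iff]
    have hsinh : 0 < Real.sinh r := Real.sinh_pos_iff.mpr hr0
    have hb0 : b = 0 ↔ Real.sin r = 0 := by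
      constructor
      · intro h
        rcases mul_eq_zero.mp h with h1 | h1
        · exact absurd h1 hsinh.ne'
        · exact h1
      · intro h; simp [b, h]
    rw [hb0, Real.sin_eq_zero_iff]
    constructor
    · rintro ⟨n, hn⟩
      have hn0 : 0 < n := by
        by_contra hc
        push_neg at hc
        have : (n : ℝ) * π ≤ 0 :=
          mul_nonpos_iff.mpr (Or.inr ⟨by exact_mod_cast hc, Real.pi_pos.le⟩)
        linarith
      refine ⟨n.toNat, by omega, ?_⟩
      have hcast : ((n.toNat : ℕ) : ℝ) = (n : ℝ) := by
        have := Int.toNat_of_nonneg hn0.le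
        exact_mod_cast this
      have : ω / 2 = ((n : ℝ) * π) ^ 2 := by rw [hn, hr2]
      rw [hcast]
      nlinarith [this]
    · rintro ⟨k, hk1, hk⟩
      refine ⟨(k : ℤ), ?_⟩
      have hkpos : (0 : ℝ) < (k : ℝ) := by exact_mod_cast hk1
      have : r = (k : ℝ) * π := by
        rw [hr, hk]
        rw [show 2 * (k : ℝ) ^ 2 * π ^ 2 / 2 = ((k : ℝ) * π) ^ 2 by ring]
        exact Real.sqrt_sq (by positivity)
      rw [this]
      push_cast
      ring
  · have hg : Tendsto (fun ω : ℝ =>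
        1 / (2 * Complex.cosh ((Real.sqrt (ω / 2) : ℂ) * (1 + Complex.I))))
        (nhdsWithin 0 (Set.Ioi 0)) (nhds (1 / 2 : ℂ)) := by
      have hc : ContinuousAt (fun ω : ℝ =>
          1 / (2 * Complex.cosh ((Real.sqrt (ω / 2) : ℂ) * (1 + Complex.I)))) 0 := by
        apply ContinuousAt.div continuousAt_const
        · fun_prop
        · simp
      have h0 : (fun ω : ℝ =>
          1 / (2 * Complex.cosh ((Real.sqrt (ω / 2) : ℂ) * (1 + Complex.I)))) 0
          = (1 / 2 : ℂ) := by simp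
      exact h0 ▸ hc.continuousWithinAt.tendsto
    refine hg.congr' ?_
    filter_upwards [self_mem_nhdsWithin] with ω hω
    rw [sqrt_I_mul ω hω]
  · have hpi : (0 : ℝ) < 2 * π ^ 2 := by positivity
    rw [sqrt_I_mul _ hpi]
    have : Real.sqrt (2 * π ^ 2 / 2) = π := by
      rw [show 2 * π ^ 2 / 2 = π ^ 2 by ring]
      exact Real.sqrt_sq Real.pi_pos.le
    rw [this, cosh_mul_one_add_I]
    rw [Real.cos_pi, Real.sin_pi]
    have hcosh : Real.cosh π = (Real.exp π + Real.exp (-π)) / 2 := Real.cosh_eq π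
    have hne : Real.exp π + Real.exp (-π) ≠ 0 := by positivity
    rw [hcosh]
    push_cast
    rw [mul_zero, mul_neg_one]
    rw [show (2 : ℂ) * (-((Complex.exp (π:ℂ) + Complex.exp (-(π:ℂ))) / 2) + 0 * Complex.I)
        = -(Complex.exp (π:ℂ) + Complex.exp (-(π:ℂ))) by ring, div_neg]
end

section
/- Fix L > x₀ > 0 and q > 0, and define H(ω) = ω Im[G_{L,x₀}(iω)] − (1/q) Re[G_{L,x₀}(iω)] for ω > 0, where G_{L,x₀}(s) = sinh(√s(L−x₀))/(2√s cosh(√s L)). Then lim_{ω→0⁺} H(ω) exists and is negative, and lim_{ω→∞} H(ω) = 0. -/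
open Real Complex Filter

lemma cpow_half_eq {ω : ℝ} (hω : 0 < ω) :
    (Complex.I * (ω : ℂ)) ^ ((1 : ℂ) / 2) = (Real.sqrt (ω/2) : ℂ) * (1 + Complex.I) := by
  have hne : Complex.I * (ω : ℂ) ≠ 0 := by
    simp [Complex.I_ne_zero, Complex.ofReal_ne_zero, hω.ne']
  have hcomm : Complex.I * (ω : ℂ) = (ω : ℂ) * Complex.I := mul_comm _ _
  have harg : Complex.arg (Complex.I * (ω : ℂ)) = π / 2 := by
    rw [hcomm, Complex.arg_real_mul _ hω, Complex.arg_I]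
  have habs : ‖Complex.I * (ω : ℂ)‖ = ω := by
    simp [abs_of_pos hω]
  have hlog : Complex.log (Complex.I * (ω : ℂ)) = (Real.log ω : ℂ) + (π/2 : ℝ) * Complex.I := by
    rw [Complex.log, habs, harg]
  rw [Complex.cpow_def_of_ne_zero hne, hlog]
  have h12 : ((Real.log ω : ℂ) + (π/2 : ℝ) * Complex.I) * (1/2)
      = ((Real.log ω / 2 : ℝ) : ℂ) + ((π/4 : ℝ) : ℂ) * Complex.I := by
    push_cast; ring
  rw [h12, Complex.exp_add, Complex.exp_mul_I, ← Complex.ofReal_exp,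
    ← Complex.ofReal_cos, ← Complex.ofReal_sin, Real.cos_pi_div_four, Real.sin_pi_div_four]
  have hexp : Real.exp (Real.log ω / 2) = Real.sqrt ω := by
    rw [Real.sqrt_eq_rpow, Real.rpow_def_of_pos hω]
    ring_nf
  rw [hexp]
  have h2 : Real.sqrt (ω/2) = Real.sqrt ω * (Real.sqrt 2 / 2) := by
    rw [Real.sqrt_div hω.le]
    rw [div_eq_mul_inv (Real.sqrt ω)]
    congr 1
    rw [eq_div_iff (by norm_num : (2:ℝ) ≠ 0)]
    rw [inv_mul_eq_div, div_eq_iff (by positivity : Real.sqrt 2 ≠ 0)]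
    exact (Real.mul_self_sqrt (by norm_num)).symm
  rw [h2]
  push_cast
  ring

lemma one_add_I_ne : (1 + Complex.I) ≠ 0 := by
  intro h
  have := congrArg Complex.re h
  simp at this

lemma sinh_one_add_I (w : ℝ) :
    Complex.sinh ((w : ℂ) * (1 + Complex.I))
      = ((Real.sinh w * Real.cos w : ℝ) : ℂ) + ((Real.cosh w * Real.sin w : ℝ) : ℂ) * Complex.I := by
  have h : (w : ℂ) * (1 + Complex.I) = (w : ℂ) + (w : ℂ) * Complex.I := by ring
  rw [h, Complex.sinh_add, Complex.sinh_mul_I, Complex.cosh_mul_I,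
    ← Complex.ofReal_sinh, ← Complex.ofReal_cosh, ← Complex.ofReal_cos, ← Complex.ofReal_sin]
  push_cast; ring

lemma cosh_one_add_I (w : ℝ) :
    Complex.cosh ((w : ℂ) * (1 + Complex.I))
      = ((Real.cosh w * Real.cos w : ℝ) : ℂ) + ((Real.sinh w * Real.sin w : ℝ) : ℂ) * Complex.I := by
  have h : (w : ℂ) * (1 + Complex.I) = (w : ℂ) + (w : ℂ) * Complex.I := by ring
  rw [h, Complex.cosh_add, Complex.sinh_mul_I, Complex.cosh_mul_I,
    ← Complex.ofReal_sinh, ← Complex.ofReal_cosh, ← Complex.ofReal_cos, ← Complex.ofReal_sin]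
  push_cast; ring

lemma abs_sinh_le (w : ℝ) :
    ‖Complex.sinh ((w : ℂ) * (1 + Complex.I))‖ ≤ 2 * Real.cosh w := by
  rw [sinh_one_add_I]
  refine (Complex.norm_le_abs_re_add_abs_im _).trans ?_
  simp only [Complex.add_re, Complex.ofReal_re, Complex.mul_re, Complex.I_re, Complex.I_im,
    Complex.ofReal_im, Complex.add_im, Complex.mul_im]
  have h1 : |Real.sinh w * Real.cos w| ≤ Real.cosh w := by
    rw [abs_mul]
    calc |Real.sinh w| * |Real.cos w| ≤ Real.cosh w * 1 := by
          apply mul_le_mul _ (Real.abs_cos_le_one w) (abs_nonneg _) (Real.cosh_pos w).le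
          rw [Real.abs_sinh]
          nlinarith [Real.cosh_sub_sinh |w|, Real.exp_pos (-|w|), Real.cosh_abs w]
      _ = Real.cosh w := mul_one _
  have h2 : |Real.cosh w * Real.sin w| ≤ Real.cosh w := by
    rw [abs_mul, abs_of_pos (Real.cosh_pos w)]
    nlinarith [Real.abs_sin_le_one w, abs_nonneg (Real.sin w), Real.cosh_pos w]
  simp only [mul_one, mul_zero, zero_mul, sub_zero, add_zero, zero_add]
  linarith

lemma sinh_le_abs_cosh (w : ℝ) :
    Real.sinh w ≤ ‖Complex.cosh ((w : ℂ) * (1 + Complex.I))‖ := by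
  rw [cosh_one_add_I]
  rw [Complex.norm_def, Complex.normSq_add_mul_I]
  have key : Real.sinh w ^ 2 ≤ (Real.cosh w * Real.cos w) ^ 2 + (Real.sinh w * Real.sin w) ^ 2 := by
    nlinarith [Real.cosh_sq w, Real.sin_sq_add_cos_sq w, sq_nonneg (Real.cos w),
      sq_nonneg (Real.sinh w * Real.cos w)]
  calc Real.sinh w ≤ |Real.sinh w| := le_abs_self _
    _ = Real.sqrt (Real.sinh w ^ 2) := (Real.sqrt_sq_eq_abs _).symm
    _ ≤ _ := Real.sqrt_le_sqrt key

lemma tendsto_g (d L : ℝ) (hd : d ≠ 0) :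
    Tendsto (fun w : ℂ => Complex.sinh (w * d) / (2 * w * Complex.cosh (w * L)))
      (nhdsWithin (0:ℂ) {(0:ℂ)}ᶜ) (nhds ((d:ℂ)/2)) := by
  have h1 : Tendsto (fun u : ℂ => Complex.sinh u / u) (nhdsWithin (0:ℂ) {(0:ℂ)}ᶜ) (nhds 1) := by
    have h := Complex.hasDerivAt_sinh 0
    rw [hasDerivAt_iff_tendsto_slope] at h
    simp only [slope_fun_def_field, Complex.sinh_zero, Complex.cosh_zero, sub_zero] at h
    exact h
  have hmap : Tendsto (fun w : ℂ => w * (d:ℂ)) (nhdsWithin (0:ℂ) {(0:ℂ)}ᶜ)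
      (nhdsWithin (0:ℂ) {(0:ℂ)}ᶜ) := by
    rw [tendsto_nhdsWithin_iff]
    constructor
    · have h : Tendsto (fun w : ℂ => w * (d:ℂ)) (nhds 0) (nhds 0) := by
        simpa using (continuous_mul_right (d:ℂ)).tendsto (0:ℂ)
      exact h.mono_left nhdsWithin_le_nhds
    · filter_upwards [self_mem_nhdsWithin] with w hw
      simp only [Set.mem_compl_iff, Set.mem_singleton_iff] at hw ⊢
      exact mul_ne_zero hw (by exact_mod_cast hd)
  have h2 : Tendsto (fun w : ℂ => Complex.sinh (w * d) / (w * d))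
      (nhdsWithin (0:ℂ) {(0:ℂ)}ᶜ) (nhds 1) := h1.comp hmap
  have h3 : Tendsto (fun w : ℂ => (d:ℂ) / (2 * Complex.cosh (w * L)))
      (nhdsWithin (0:ℂ) {(0:ℂ)}ᶜ) (nhds ((d:ℂ)/2)) := by
    have hc : Tendsto (fun w : ℂ => 2 * Complex.cosh (w * L)) (nhds 0) (nhds 2) := by
      have hcont : Continuous fun w : ℂ => 2 * Complex.cosh (w * L) := by continuity
      simpa using hcont.tendsto 0
    have h := (tendsto_const_nhds (x := (d:ℂ)) (f := nhds (0:ℂ))).div hc (by norm_num)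
    exact h.mono_left nhdsWithin_le_nhds
  have hmul := h2.mul h3
  rw [one_mul] at hmul
  refine hmul.congr' ?_
  filter_upwards [self_mem_nhdsWithin] with w hw
  simp only [Set.mem_compl_iff, Set.mem_singleton_iff] at hw
  by_cases hc : Complex.cosh (w * L) = 0
  · simp [hc]
  · have hdC : (d:ℂ) ≠ 0 := by exact_mod_cast hd
    field_simp

lemma tendsto_z_zero :
    Tendsto (fun ω : ℝ => (Complex.I * (ω:ℂ)) ^ ((1:ℂ)/2)) (nhdsWithin (0:ℝ) (Set.Ioi 0))
      (nhdsWithin (0:ℂ) {(0:ℂ)}ᶜ) := by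
  rw [tendsto_nhdsWithin_iff]
  constructor
  · have h : Tendsto (fun ω : ℝ => (Real.sqrt (ω/2) : ℂ) * (1 + Complex.I))
        (nhdsWithin (0:ℝ) (Set.Ioi 0)) (nhds 0) := by
      have hc : Continuous fun ω : ℝ => (Real.sqrt (ω/2) : ℂ) * (1 + Complex.I) :=
        (Complex.continuous_ofReal.comp
          (Real.continuous_sqrt.comp (continuous_id.div_const 2))).mul continuous_const
      have h0 := hc.tendsto 0
      simp only [zero_div, Real.sqrt_zero, Complex.ofReal_zero, zero_mul] at h0
      exact h0.mono_left nhdsWithin_le_nhds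
    refine Tendsto.congr' ?_ h
    filter_upwards [self_mem_nhdsWithin] with ω hω
    exact (cpow_half_eq hω).symm
  · filter_upwards [self_mem_nhdsWithin] with ω hω
    simp only [Set.mem_compl_iff, Set.mem_singleton_iff]
    rw [cpow_half_eq hω]
    exact mul_ne_zero
      (by exact_mod_cast (Real.sqrt_pos.mpr (by linarith [Set.mem_Ioi.mp hω])).ne') one_add_I_ne

lemma sqrt_tendsto_atTop : Tendsto Real.sqrt atTop atTop := by
  rw [tendsto_atTop]
  intro b
  filter_upwards [eventually_ge_atTop (max (b^2) 0)] with x hx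
  rcases le_or_gt b 0 with hb | hb
  · exact hb.trans (Real.sqrt_nonneg x)
  · have hx2 : b^2 ≤ x := le_trans (le_max_left _ _) hx
    calc b = Real.sqrt (b^2) := by rw [Real.sqrt_sq hb.le]
      _ ≤ Real.sqrt x := Real.sqrt_le_sqrt hx2

lemma exp_quarter_le_sinh {t : ℝ} (ht : 1 ≤ t) : Real.exp t / 4 ≤ Real.sinh t := by
  rw [Real.sinh_eq]
  have h1 : Real.exp (-t) ≤ Real.exp (-1) := Real.exp_le_exp.mpr (by linarith)
  have h2 : Real.exp (-1) = (Real.exp 1)⁻¹ := by rw [Real.exp_neg]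
  have h3 : (2.7182818283 : ℝ) < Real.exp 1 := Real.exp_one_gt_d9
  have h4 : Real.exp 1 ≤ Real.exp t := Real.exp_le_exp.mpr ht
  have h5 : Real.exp (-1) < 1/2 := by
    rw [h2]
    rw [inv_lt_comm₀ (by linarith) (by norm_num)]
    norm_num
    linarith
  nlinarith [Real.exp_pos t]

lemma cosh_le_exp_self {t : ℝ} (ht : 0 ≤ t) : Real.cosh t ≤ Real.exp t := by
  rw [Real.cosh_eq]
  have := Real.exp_le_exp.mpr (by linarith : -t ≤ t)
  linarith

set_option maxHeartbeats 1000000 in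
/-- For fixed `L > x₀ > 0`, `q > 0`, and
`H(ω) = ω Im G_{L,x₀}(iω) - (1/q) Re G_{L,x₀}(iω)` with
`G_{L,x₀}(s) = sinh(√s(L-x₀))/(2√s cosh(√s L))` (principal square root):
`H` has a negative limit as `ω → 0⁺` and `H(ω) → 0` as `ω → ∞`. -/
theorem stmt18 (L x₀ q : ℝ) (hx₀ : 0 < x₀) (hL : x₀ < L) (hq : 0 < q)
    (H : ℝ → ℝ)
    (hH : ∀ ω : ℝ, H ω =
      ω * (Complex.sinh ((Complex.I * (ω : ℂ)) ^ ((1 : ℂ) / 2) * ((L : ℂ) - (x₀ : ℂ))) /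
          (2 * (Complex.I * (ω : ℂ)) ^ ((1 : ℂ) / 2) *
            Complex.cosh ((Complex.I * (ω : ℂ)) ^ ((1 : ℂ) / 2) * (L : ℂ)))).im -
        (1 / q) * (Complex.sinh ((Complex.I * (ω : ℂ)) ^ ((1 : ℂ) / 2) * ((L : ℂ) - (x₀ : ℂ))) /
          (2 * (Complex.I * (ω : ℂ)) ^ ((1 : ℂ) / 2) *
            Complex.cosh ((Complex.I * (ω : ℂ)) ^ ((1 : ℂ) / 2) * (L : ℂ)))).re) :
    (∃ c : ℝ, c < 0 ∧ Tendsto H (nhdsWithin 0 (Set.Ioi 0)) (nhds c)) ∧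
    Tendsto H atTop (nhds 0) := by
  set d : ℝ := L - x₀ with hd_def
  have hd : 0 < d := by simp [hd_def]; linarith
  set z : ℝ → ℂ := fun ω => (Complex.I * (ω:ℂ)) ^ ((1:ℂ)/2) with hz_def
  set G : ℝ → ℂ := fun ω =>
    Complex.sinh (z ω * ((L : ℂ) - (x₀ : ℂ))) /
      (2 * z ω * Complex.cosh (z ω * (L : ℂ))) with hG_def
  have hHG : ∀ ω : ℝ, H ω = ω * (G ω).im - (1/q) * (G ω).re := hH
  constructor
  · -- limit at 0⁺
    have hneg : (0:ℝ) < d / (2*q) := by positivity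
    refine ⟨-(d / (2*q)), by linarith, ?_⟩
    have hGlim : Tendsto G (nhdsWithin (0:ℝ) (Set.Ioi 0)) (nhds ((d:ℂ)/2)) := by
      have hcomp := (tendsto_g d L hd.ne').comp tendsto_z_zero
      refine hcomp.congr fun ω => ?_
      simp only [Function.comp, hG_def]
      congr 2
      push_cast [hd_def]
      ring
    have hre : Tendsto (fun ω => (G ω).re) (nhdsWithin (0:ℝ) (Set.Ioi 0)) (nhds (d/2)) := by
      have := (Complex.continuous_re.tendsto _).comp hGlim
      simpa [Function.comp_def] using this
    have him : Tendsto (fun ω => (G ω).im) (nhdsWithin (0:ℝ) (Set.Ioi 0)) (nhds 0) := by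
      have := (Complex.continuous_im.tendsto _).comp hGlim
      simpa [Function.comp_def] using this
    have hid : Tendsto (fun ω : ℝ => ω) (nhdsWithin (0:ℝ) (Set.Ioi 0)) (nhds 0) :=
      tendsto_id.mono_left nhdsWithin_le_nhds
    have hfinal := (hid.mul him).sub (tendsto_const_nhds (x := (1/q)).mul hre)
    simp only [zero_mul, zero_sub] at hfinal
    refine Tendsto.congr (fun ω => (hHG ω).symm) ?_
    convert hfinal using 1
    field_simp
  · -- limit at ∞
    set C : ℝ := 8 * (2 + 1/q) with hC
    have hCpos : 0 < C := by positivity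
    have hKlim : Tendsto (fun a : ℝ => C * a^2 * Real.exp (-(x₀ * a))) atTop (nhds 0) := by
      have h1 : Tendsto (fun x : ℝ => x ^ 2 * Real.exp (-x)) atTop (nhds 0) :=
        tendsto_pow_mul_exp_neg_atTop_nhds_zero 2
      have h2 : Tendsto (fun a : ℝ => x₀ * a) atTop atTop :=
        tendsto_id.const_mul_atTop hx₀
      have h3 := (h1.comp h2).const_mul (C / x₀^2)
      rw [mul_zero] at h3
      refine h3.congr fun a => ?_
      simp only [Function.comp]
      field_simp
    have halim : Tendsto (fun ω : ℝ => Real.sqrt (ω/2)) atTop atTop :=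
      sqrt_tendsto_atTop.comp (tendsto_id.atTop_div_const (by norm_num))
    have hbound := hKlim.comp halim
    refine squeeze_zero_norm' ?_ hbound
    filter_upwards [eventually_ge_atTop (max (2 * (max 1 L⁻¹)^2) 1)] with ω hω
    simp only [Function.comp]
    set a : ℝ := Real.sqrt (ω/2) with ha_def
    have hL0 : 0 < L := lt_trans hx₀ hL
    have hω1 : (1:ℝ) ≤ ω := le_trans (le_max_right _ _) hω
    have hω0 : 0 < ω := by linarith
    have ha2 : a^2 = ω/2 := Real.sq_sqrt (by linarith)
    have ham : max 1 L⁻¹ ≤ a := by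
      have hm : (max 1 L⁻¹)^2 ≤ ω/2 := by
        have := le_trans (le_max_left _ _) hω
        linarith
      calc max 1 L⁻¹ = Real.sqrt ((max 1 L⁻¹)^2) :=
            (Real.sqrt_sq (le_trans zero_le_one (le_max_left _ _))).symm
        _ ≤ a := Real.sqrt_le_sqrt hm
    have ha1 : 1 ≤ a := le_trans (le_max_left _ _) ham
    have ha0 : 0 < a := by linarith
    have haL : 1 ≤ a * L := by
      have hinv : L⁻¹ ≤ a := le_trans (le_max_right _ _) ham
      calc (1:ℝ) = L⁻¹ * L := by field_simp
        _ ≤ a * L := mul_le_mul_of_nonneg_right hinv hL0.le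
    have hz : z ω = (a:ℂ) * (1 + Complex.I) := cpow_half_eq hω0
    have hnum : ‖Complex.sinh (z ω * ((L:ℂ) - (x₀:ℂ)))‖ ≤ 2 * Real.exp (a*d) := by
      have harga : z ω * ((L:ℂ) - (x₀:ℂ)) = ((a*d : ℝ) : ℂ) * (1 + Complex.I) := by
        rw [hz]; push_cast [hd_def]; ring
      rw [harga]
      refine (abs_sinh_le _).trans ?_
      have := cosh_le_exp_self (t := a*d) (by positivity)
      linarith
    have hden : a * Real.exp (a*L) / 2 ≤ ‖2 * z ω * Complex.cosh (z ω * (L:ℂ))‖ := by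
      have hargL : z ω * (L:ℂ) = ((a*L : ℝ) : ℂ) * (1 + Complex.I) := by
        rw [hz]; push_cast; ring
      rw [norm_mul, norm_mul, hargL]
      have h1 : Real.exp (a*L)/4 ≤ ‖Complex.cosh (((a*L:ℝ):ℂ) * (1+Complex.I))‖ :=
        le_trans (exp_quarter_le_sinh haL) (sinh_le_abs_cosh _)
      have h2 : ‖z ω‖ = a * Real.sqrt 2 := by
        rw [hz, norm_mul, Complex.norm_real, Real.norm_eq_abs, _root_.abs_of_nonneg ha0.le]
        congr 1
        rw [Complex.norm_def]
        norm_num [Complex.normSq_apply]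
      rw [Complex.norm_two, h2]
      have hs2 : (1:ℝ) ≤ Real.sqrt 2 := by
        rw [show (1:ℝ) = Real.sqrt 1 from (Real.sqrt_one).symm]
        exact Real.sqrt_le_sqrt (by norm_num)
      calc a * Real.exp (a*L)/2 = 2 * (a*1) * (Real.exp (a*L)/4) := by ring
        _ ≤ 2 * (a * Real.sqrt 2) * ‖Complex.cosh (((a*L:ℝ):ℂ) * (1+Complex.I))‖ := by
            apply mul_le_mul (by nlinarith) h1 (by positivity) (by positivity)
    have habsG : ‖G ω‖ ≤ 4 * Real.exp (-(x₀ * a)) / a := by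
      have hGa : ‖G ω‖ = ‖Complex.sinh (z ω * ((L:ℂ) - (x₀:ℂ)))‖ /
          ‖2 * z ω * Complex.cosh (z ω * (L:ℂ))‖ := by
        simp only [hG_def, norm_div]
      rw [hGa]
      have hden0 : 0 < a * Real.exp (a*L) / 2 := by positivity
      refine (div_le_div₀ (by positivity) hnum hden0 hden).trans_eq ?_
      have hsub : a*d - a*L = -(x₀*a) := by rw [hd_def]; ring
      rw [← hsub, Real.exp_sub]
      field_simp
      ring
    rw [Real.norm_eq_abs, hHG ω]
    have himle := Complex.abs_im_le_norm (G ω)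
    have hrele := Complex.abs_re_le_norm (G ω)
    have habs0 := norm_nonneg (G ω)
    set E : ℝ := Real.exp (-(x₀ * a)) with hE_def
    have hE0 : 0 < E := Real.exp_pos _
    have hstep1 : |ω * (G ω).im - 1/q * (G ω).re| ≤ (ω + 1/q) * ‖G ω‖ := by
      have h1 : |ω * (G ω).im - 1/q * (G ω).re| ≤ |ω * (G ω).im| + |1/q * (G ω).re| := by
        simpa [sub_eq_add_neg, abs_neg] using abs_add_le (ω * (G ω).im) (-(1/q * (G ω).re))
      rw [abs_mul, abs_mul, abs_of_pos hω0, abs_of_pos (by positivity : (0:ℝ) < 1/q)] at h1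
      have h2 : |(G ω).im| ≤ ‖G ω‖ := Complex.abs_im_le_norm _
      have h3 : |(G ω).re| ≤ ‖G ω‖ := Complex.abs_re_le_norm _
      have h4 := mul_le_mul_of_nonneg_left h2 hω0.le
      have h5 := mul_le_mul_of_nonneg_left h3 (le_of_lt (by positivity : (0:ℝ) < 1/q))
      nlinarith
    refine hstep1.trans ?_
    have hstep2 : (ω + 1/q) * ‖G ω‖ ≤ (ω + 1/q) * (4 * E / a) := by
      apply mul_le_mul_of_nonneg_left habsG (by positivity)
    refine hstep2.trans ?_
    have hωa : ω = 2 * a^2 := by rw [ha2]; ring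
    have h4 : 4 * E / a ≤ 4 * E := by
      apply div_le_self (by positivity) ha1
    have h5 : ω + 1/q ≤ (2 + 1/q) * a^2 := by
      rw [hωa]
      have ha21 : 1 ≤ a^2 := by nlinarith
      have h6 := mul_le_mul_of_nonneg_left ha21 (le_of_lt (by positivity : (0:ℝ) < 1/q))
      nlinarith
    calc (ω + 1/q) * (4 * E / a) ≤ ((2 + 1/q) * a^2) * (4 * E) := by
          apply mul_le_mul h5 h4 (by positivity) (by positivity)
      _ ≤ C * a^2 * E := by
          have heq : C * a^2 * E = 2 * (((2 + 1/q) * a^2) * (4 * E)) := by rw [hC]; ring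
          have hXpos : 0 ≤ ((2 + 1/q) * a^2) * (4 * E) := by positivity
          rw [heq]; linarith
end
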